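/- Fuzzy Bessel inequality: Let X be a complex inner product space, f : X → X → ℂ, and A, B real constants with 0 < A ≤ B such that for all x, y ∈ X: A·|⟨x,y⟩| ≤ |f x y| ≤ B·|⟨x,y⟩|. If (e_i)_{i∈ℕ} is an orthonormal sequence in X, then for every x ∈ X: ∑_{i=0}^{∞} |f x (e_i)|² ≤ (B²/A)·|f x x| (in particular the series on the left converges). -/

import Mathlib

/-!
Bessel's inequality gives `∑ |⟪x, e i⟫|² ≤ ‖x‖²`. The upper fuzzy bound turns this into
`∑ |f x (e i)|² ≤ B² ‖x‖²`, and the lower one applied at `y = x`, where `⟪x, x⟫ = ‖x‖²`,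
gives `A ‖x‖² ≤ |f x x|`.
-/

open scoped InnerProductSpace

theorem Orthonormal.summable_and_tsum_le_of_norm_le {𝕜 E F ι : Type*} [RCLike 𝕜]
    [NormedAddCommGroup E] [InnerProductSpace 𝕜 E] [SeminormedAddGroup F] {v : ι → E}
    (hv : Orthonormal 𝕜 v) (x : E) {g : ι → F} {B : ℝ} (hg : ∀ i, ‖g i‖ ≤ B * ‖⟪x, v i⟫_𝕜‖) :
    Summable (fun i => ‖g i‖ ^ 2) ∧ ∑' i, ‖g i‖ ^ 2 ≤ B ^ 2 * ‖x‖ ^ 2 := by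
  have hgv : ∀ i, ‖g i‖ ^ 2 ≤ B ^ 2 * ‖⟪v i, x⟫_𝕜‖ ^ 2 := fun i => by
    rw [← mul_pow, norm_inner_symm]
    exact pow_le_pow_left₀ (norm_nonneg _) (hg i) 2
  have hsum := (hv.inner_products_summable x).mul_left (B ^ 2)
  have hsum_g : Summable (fun i => ‖g i‖ ^ 2) :=
    hsum.of_nonneg_of_le (fun i => by positivity) hgv
  refine ⟨hsum_g, ?_⟩
  calc ∑' i, ‖g i‖ ^ 2 ≤ ∑' i, B ^ 2 * ‖⟪v i, x⟫_𝕜‖ ^ 2 := hsum_g.tsum_le_tsum hgv hsum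
    _ = B ^ 2 * ∑' i, ‖⟪v i, x⟫_𝕜‖ ^ 2 := tsum_mul_left
    _ ≤ B ^ 2 * ‖x‖ ^ 2 := by gcongr; exact hv.tsum_inner_products_le x

theorem norm_inner_self_eq_norm_sq {𝕜 E : Type*} [RCLike 𝕜] [NormedAddCommGroup E]
    [InnerProductSpace 𝕜 E] (x : E) : ‖⟪x, x⟫_𝕜‖ = ‖x‖ ^ 2 := by
  rw [inner_self_eq_norm_sq_to_K, norm_pow, RCLike.norm_ofReal, abs_norm]

theorem fuzzy_bessel_general {X : Type*} [NormedAddCommGroup X]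
    [InnerProductSpace ℂ X] (f : X → X → ℂ) (A B : ℝ)
    (hA : 0 < A)
    (hf : ∀ x y : X, A * ‖⟪x, y⟫_ℂ‖ ≤ ‖f x y‖ ∧
      ‖f x y‖ ≤ B * ‖⟪x, y⟫_ℂ‖)
    (e : ℕ → X) (he : ∀ i j : ℕ, ⟪e i, e j⟫_ℂ = if i = j then 1 else 0) :
    ∀ x : X, Summable (fun i : ℕ => ‖f x (e i)‖ ^ 2) ∧
      ∑' i : ℕ, ‖f x (e i)‖ ^ 2 ≤ (B ^ 2 / A) * ‖f x x‖ := by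
  intro x
  have he_on : Orthonormal ℂ e := orthonormal_iff_ite.2 he
  obtain ⟨hsum, hle⟩ := he_on.summable_and_tsum_le_of_norm_le x fun i => (hf x (e i)).2
  have hx : A * ‖x‖ ^ 2 ≤ ‖f x x‖ := norm_inner_self_eq_norm_sq (𝕜 := ℂ) x ▸ (hf x x).1
  refine ⟨hsum, hle.trans ?_⟩
  calc B ^ 2 * ‖x‖ ^ 2 ≤ B ^ 2 * (‖f x x‖ / A) := by gcongr; rwa [le_div_iff₀' hA]
    _ = B ^ 2 / A * ‖f x x‖ := by ring

/-- Fuzzy Bessel inequality: for an orthonormal sequence `(e i)`,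
`∑' i, |f x (e i)|² ≤ (B²/A)·|f x x|`, and the series converges. -/
theorem fuzzy_bessel {X : Type*} [NormedAddCommGroup X]
    [InnerProductSpace ℂ X] (f : X → X → ℂ) (A B : ℝ)
    (hA : 0 < A) (hAB : A ≤ B)
    (hf : ∀ x y : X, A * ‖⟪x, y⟫_ℂ‖ ≤ ‖f x y‖ ∧
      ‖f x y‖ ≤ B * ‖⟪x, y⟫_ℂ‖)
    (e : ℕ → X) (he : ∀ i j : ℕ, ⟪e i, e j⟫_ℂ = if i = j then 1 else 0) :
    ∀ x : X, Summable (fun i : ℕ => ‖f x (e i)‖ ^ 2) ∧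
      ∑' i : ℕ, ‖f x (e i)‖ ^ 2 ≤ (B ^ 2 / A) * ‖f x x‖ :=
  fuzzy_bessel_general f A B hA hf e he
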